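/- Let Q be a finite type with N elements, with interpretations â : Q^s → Q for each symbol a of arity s of a ranked alphabet Σ, and let R ⊆ Q be the least set closed under all the â. Then every q ∈ R admits a derivation sequence q₁, …, q_m of pairwise distinct elements of R with q_m = q and with each q_i obtained by applying some â to earlier elements of the sequence; in particular m ≤ N, and hence there is a term t with eval(t) = q and height(t) ≤ N − 1. -/

import Mathlib

/-- Terms over a ranked alphabet `σ` with arity function `ar`. -/
inductive RTerm (σ : Type*) (ar : σ → ℕ) : Type _
  | node (a : σ) (children : Fin (ar a) → RTerm σ ar) : RTerm σ ar

/-- Bottom-up evaluation of a term, given an interpretation of each symbol. -/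
def RTerm.eval {σ : Type*} {ar : σ → ℕ} {Q : Type*}
    (interp : (a : σ) → (Fin (ar a) → Q) → Q) : RTerm σ ar → Q
  | node a c => interp a fun i => (c i).eval interp

/-- The height of a term: the number of edges on a longest root-to-leaf path. -/
def RTerm.height {σ : Type*} {ar : σ → ℕ} : RTerm σ ar → ℕ
  | node _ c => Finset.univ.sup fun i => (c i).height + 1

/-- A set `S ⊆ Q` is closed under the interpretations of the symbols. -/
def SymClosed {σ : Type*} {ar : σ → ℕ} {Q : Type*}
    (interp : (a : σ) → (Fin (ar a) → Q) → Q) (S : Set Q) : Prop :=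
  ∀ (a : σ) (q : Fin (ar a) → Q), (∀ i, q i ∈ S) → interp a q ∈ S

/-!
Some duplicate-free derivation sequence has a closed set of entries: otherwise every such
sequence could be extended by a new element, giving duplicate-free lists longer than `card Q`.
That set then contains `R`, and truncating the sequence after `q` gives the required one.
Unfolding the derivation steps into a term, the entry at position `i` is the value of a term of
height at most `i`.
-/

section Derivation

variable {σ : Type*} {ar : σ → ℕ} {Q : Type*} (interp : (a : σ) → (Fin (ar a) → Q) → Q)

def IsDerivation (L : List Q) : Prop :=
  ∀ i (hi : i < L.length), ∃ (a : σ) (q : Fin (ar a) → Q), (∀ l, q l ∈ L.take i) ∧ L[i] = interp a q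

variable {interp} {L : List Q}

theorem IsDerivation.take (hL : IsDerivation interp L) (n : ℕ) :
    IsDerivation interp (L.take n) := by
  intro i hi
  rw [List.length_take] at hi
  obtain ⟨a, q, hq, heq⟩ := hL i (by omega)
  refine ⟨a, q, fun l => ?_, by rw [List.getElem_take, heq]⟩
  rw [List.take_take, min_eq_left (by omega)]
  exact hq l

theorem IsDerivation.append_singleton (hL : IsDerivation interp L) {a : σ}
    {q : Fin (ar a) → Q} (hq : ∀ l, q l ∈ L) : IsDerivation interp (L ++ [interp a q]) := by
  intro i hi
  rw [List.length_append, List.length_singleton] at hi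
  rcases (Nat.lt_succ_iff.1 hi).lt_or_eq with hi | rfl
  · obtain ⟨a', q', hq', heq⟩ := hL i hi
    refine ⟨a', q', ?_, ?_⟩
    · rwa [List.take_append_of_le_length hi.le]
    · rw [List.getElem_append_left hi, heq]
  · exact ⟨a, q, by simpa using hq, by simp⟩

theorem IsDerivation.forall_mem (hL : IsDerivation interp L) {S : Set Q}
    (hS : SymClosed interp S) : ∀ x ∈ L, x ∈ S := by
  refine List.forall_mem_iff_getElem.2 fun i => ?_
  induction i using Nat.strong_induction_on with
  | _ i ih =>
    intro hi
    obtain ⟨a, q, hq, heq⟩ := hL i hi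
    rw [heq]
    refine hS a q fun l => ?_
    obtain ⟨j, hj, hjq⟩ := List.mem_take_iff_getElem.1 (hq l)
    rw [← hjq]
    exact ih j (by omega) _

theorem IsDerivation.exists_get_eq (hL : IsDerivation interp L) (i : Fin L.length) :
    ∃ (a : σ) (j : Fin (ar a) → Fin L.length),
      (∀ l, j l < i) ∧ L.get i = interp a fun l => L.get (j l) := by
  obtain ⟨a, q, hq, heq⟩ := hL i i.2
  choose j hj hjq using fun l => List.mem_take_iff_getElem.1 (hq l)
  exact ⟨a, fun l => ⟨j l, (hj l).trans_le (min_le_right _ _)⟩,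
    fun l => (hj l).trans_le (min_le_left _ _), by simp [heq, hjq]⟩

theorem IsDerivation.exists_eval_eq_get (hL : IsDerivation interp L) (i : Fin L.length) :
    ∃ t : RTerm σ ar, t.eval interp = L.get i ∧ t.height ≤ i := by
  obtain ⟨i, hi⟩ := i
  induction i using Nat.strong_induction_on with
  | _ i ih =>
    obtain ⟨a, j, hj, heq⟩ := hL.exists_get_eq ⟨i, hi⟩
    choose t ht_eval ht_height using fun l => ih (j l) (hj l) (j l).2
    refine ⟨.node a t, by simp only [RTerm.eval, ht_eval, heq], ?_⟩
    refine Finset.sup_le fun l _ => ?_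
    have h_child : (t l).height ≤ j l := ht_height l
    have h_lt : (j l : ℕ) < i := hj l
    show _ ≤ i
    omega

variable (interp)

theorem exists_nodup_isDerivation_symClosed [Fintype Q] :
    ∃ L : List Q, L.Nodup ∧ IsDerivation interp L ∧ SymClosed interp {x | x ∈ L} := by
  by_contra! hopen
  have hlong : ∀ n, ∃ L : List Q, L.Nodup ∧ IsDerivation interp L ∧ L.length = n := by
    intro n
    induction n with
    | zero => exact ⟨[], List.nodup_nil, fun i hi => absurd hi (Nat.not_lt_zero _), rfl⟩
    | succ n ih =>
      obtain ⟨L, hnd, hL, rfl⟩ := ih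
      obtain ⟨a, q, hq, hnew⟩ : ∃ a q, (∀ l, q l ∈ L) ∧ interp a q ∉ L := by
        simpa [SymClosed] using hopen L hnd hL
      refine ⟨L ++ [interp a q], ?_, hL.append_singleton hq, by simp⟩
      exact List.concat_eq_append ▸ hnd.concat hnew
  obtain ⟨L, hnd, -, hlen⟩ := hlong (Fintype.card Q + 1)
  have := hnd.length_le_card
  omega

theorem exists_nodup_isDerivation_append_singleton [Fintype Q] {q : Q}
    (hq : ∀ S, SymClosed interp S → q ∈ S) :
    ∃ L : List Q, (L ++ [q]).Nodup ∧ IsDerivation interp (L ++ [q]) := by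
  obtain ⟨L, hnd, hL, hclosed⟩ := exists_nodup_isDerivation_symClosed interp
  obtain ⟨k, hk, rfl⟩ := List.mem_iff_getElem.1 (hq _ hclosed)
  refine ⟨L.take k, ?_, ?_⟩ <;> rw [List.take_concat_get' L k hk]
  exacts [hnd.sublist (List.take_sublist _ _), hL.take _]

end Derivation

theorem reachable_has_short_derivation {σ : Type*} {ar : σ → ℕ}
    {Q : Type*} [Fintype Q]
    (interp : (a : σ) → (Fin (ar a) → Q) → Q) (R : Set Q)
    (hclosed : SymClosed interp R)
    (hleast : ∀ S : Set Q, SymClosed interp S → R ⊆ S) :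
    ∀ q ∈ R,
      (∃ (m : ℕ), 0 < m ∧ m ≤ Fintype.card Q ∧
        ∃ qs : Fin m → Q, Function.Injective qs ∧ (∀ i, qs i ∈ R) ∧
          (∀ i : Fin m, ∃ (a : σ) (j : Fin (ar a) → Fin m),
            (∀ l, (j l : ℕ) < (i : ℕ)) ∧ qs i = interp a fun l => qs (j l)) ∧
          ∃ ilast : Fin m, (ilast : ℕ) = m - 1 ∧ qs ilast = q) ∧
      ∃ t : RTerm σ ar, t.eval interp = q ∧ t.height ≤ Fintype.card Q - 1 := by
  intro q hq
  obtain ⟨L, hnd, hder⟩ :=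
    exists_nodup_isDerivation_append_singleton interp fun S hS => hleast S hS hq
  have hlen : (L ++ [q]).length = L.length + 1 := by simp
  have hcard : (L ++ [q]).length ≤ Fintype.card Q := hnd.length_le_card
  let ilast : Fin (L ++ [q]).length := ⟨L.length, by omega⟩
  have hlast : (L ++ [q]).get ilast = q := by simp [ilast]
  obtain ⟨t, ht_eval, ht_height⟩ := hder.exists_eval_eq_get ilast
  refine ⟨⟨_, by omega, hcard, (L ++ [q]).get, List.nodup_iff_injective_get.1 hnd,
    fun i => hder.forall_mem hclosed _ (List.get_mem _ i), hder.exists_get_eq,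
    ilast, by simp [ilast], hlast⟩, t, ht_eval.trans hlast, ?_⟩
  simp only [ilast] at ht_height
  omega
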